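/- Let n ≥ 2 and m ≥ 1. In the oscillator representation of gl(n|m) on A, consider for ℓ₁ ∈ ℕ and s ∈ {1,...,m+1} with s > ℓ₁ + n the element v = η^{s−ℓ₁−n}·(x_1^{ℓ₁}·ϑ_m ϑ_{m−1}⋯ϑ_s), where η = Σ_i x_i y_i + Σ_r θ_r ϑ_r. Then v is annihilated by all raising operators: E_{ij}(v) = 0 for 1 ≤ i < j ≤ n, E_{n+r,n+s'}(v) = 0 for 1 ≤ r < s' ≤ m, and E_{i,n+r}(v) = 0 for all i ∈ {1,...,n}, r ∈ {1,...,m}. -/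

import Mathlib

open TensorProduct MvPolynomial

noncomputable section

variable (n m : ℕ)

/-- bosonic polynomial part -/
abbrev PolyA (n : ℕ) := MvPolynomial (Fin n ⊕ Fin n) ℂ
/-- fermionic exterior part -/
abbrev ExtA (m : ℕ) := ExteriorAlgebra ℂ ((Fin m ⊕ Fin m) → ℂ)
/-- full supersymmetric algebra -/
abbrev SAlg (n m : ℕ) := PolyA n ⊗[ℂ] ExtA m

-- generators
def xv (i : Fin n) : PolyA n := X (Sum.inl i)
def yv (i : Fin n) : PolyA n := X (Sum.inr i)
def θv (r : Fin m) : ExtA m := ExteriorAlgebra.ι ℂ (Pi.single (Sum.inl r) 1)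
def ϑv (r : Fin m) : ExtA m := ExteriorAlgebra.ι ℂ (Pi.single (Sum.inr r) 1)

-- odd superderivations on the exterior part
def dθ (r : Fin m) : Module.End ℂ (ExtA m) :=
  CliffordAlgebra.contractLeft (Q := (0 : QuadraticForm ℂ ((Fin m ⊕ Fin m) → ℂ)))
    (LinearMap.proj (Sum.inl r))
def dϑ (r : Fin m) : Module.End ℂ (ExtA m) :=
  CliffordAlgebra.contractLeft (Q := (0 : QuadraticForm ℂ ((Fin m ⊕ Fin m) → ℂ)))
    (LinearMap.proj (Sum.inr r))

-- operators on the full algebra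
def pdx (i : Fin n) : Module.End ℂ (SAlg n m) :=
  TensorProduct.map ((pderiv (Sum.inl i) : Derivation ℂ (PolyA n) (PolyA n)) : PolyA n →ₗ[ℂ] PolyA n) LinearMap.id
def pdy (i : Fin n) : Module.End ℂ (SAlg n m) :=
  TensorProduct.map ((pderiv (Sum.inr i) : Derivation ℂ (PolyA n) (PolyA n)) : PolyA n →ₗ[ℂ] PolyA n) LinearMap.id
def pdθ (r : Fin m) : Module.End ℂ (SAlg n m) :=
  TensorProduct.map LinearMap.id (dθ m r)
def pdϑ (r : Fin m) : Module.End ℂ (SAlg n m) :=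
  TensorProduct.map LinearMap.id (dϑ m r)

-- multiplication operators
def mx (i : Fin n) : Module.End ℂ (SAlg n m) := LinearMap.mulLeft ℂ (xv n i ⊗ₜ[ℂ] 1)
def mθ (r : Fin m) : Module.End ℂ (SAlg n m) := LinearMap.mulLeft ℂ ((1 : PolyA n) ⊗ₜ[ℂ] θv m r)

def my (i : Fin n) : Module.End ℂ (SAlg n m) := LinearMap.mulLeft ℂ (yv n i ⊗ₜ[ℂ] 1)
def mϑ (r : Fin m) : Module.End ℂ (SAlg n m) := LinearMap.mulLeft ℂ ((1 : PolyA n) ⊗ₜ[ℂ] ϑv m r)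

/-- the element η = Σ_i x_i y_i + Σ_r θ_r ϑ_r of the superalgebra -/
def ηelt : SAlg n m :=
  (∑ i : Fin n, (xv n i * yv n i) ⊗ₜ[ℂ] (1 : ExtA m))
    + ∑ r : Fin m, (1 : PolyA n) ⊗ₜ[ℂ] (θv m r * ϑv m r)

/-- the super-Laplacian Δ = Σ_i ∂_{x_i}∂_{y_i} + Σ_r ∂_{θ_r}∂_{ϑ_r} -/
def ΔS : Module.End ℂ (SAlg n m) :=
  (∑ i : Fin n, pdx n m i ∘ₗ pdy n m i) + ∑ r : Fin m, pdθ n m r ∘ₗ pdϑ n m r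
/-- multiplication by η -/
def ηop : Module.End ℂ (SAlg n m) := LinearMap.mulLeft ℂ (ηelt n m)

/-- E_{ij} = x_i∂_{x_j} − y_j∂_{y_i} -/
def Eij (i j : Fin n) : Module.End ℂ (SAlg n m) := mx n m i ∘ₗ pdx n m j - my n m j ∘ₗ pdy n m i
/-- E_{i,n+r} = x_i∂_{θ_r} − ϑ_r∂_{y_i} -/
def Einr (i : Fin n) (r : Fin m) : Module.End ℂ (SAlg n m) :=
  mx n m i ∘ₗ pdθ n m r - mϑ n m r ∘ₗ pdy n m i
/-- E_{n+r,i} = θ_r∂_{x_i} + y_i∂_{ϑ_r} -/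
def Enri (r : Fin m) (i : Fin n) : Module.End ℂ (SAlg n m) :=
  mθ n m r ∘ₗ pdx n m i + my n m i ∘ₗ pdϑ n m r
/-- E_{n+r,n+s} = θ_r∂_{θ_s} − ϑ_s∂_{ϑ_r} -/
def Enrs (r s : Fin m) : Module.End ℂ (SAlg n m) :=
  mθ n m r ∘ₗ pdθ n m s - mϑ n m s ∘ₗ pdϑ n m r

/-- ϑ⃗_s = ϑ_m ϑ_{m−1}⋯ϑ_s (descending product; equals 1 when s = m+1) -/
def ϑvec (s : ℕ) : ExtA m := ((((List.finRange m).drop (s - 1)).reverse).map (ϑv m)).prod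


/-!
The quadratic element `η` is `gl(n|m)`-invariant: each operator `E = c₁ ∂₁ - c₂ ∂₂` obeys the
Leibniz rule at `η` and kills it, and `η` is central, so `E` commutes with multiplication by `η`.
It therefore suffices that the raising operators kill `x₁^ℓ ⊗ ϑ_m ⋯ ϑ_s`. The operators `E_ij`
(`i < j`) and `E_{i,n+r}` do so because the vector involves neither `x_j` (`j > 1`) nor any `y`
or `θ`. For `E_{n+r,n+s'}` with `r < s'`, either `ϑ_r` is absent from the product, or `ϑ_{s'}`
is present and survives `∂_{ϑ_r}`, so that multiplying by `ϑ_{s'}` gives `ϑ_{s'}² = 0`.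
-/

theorem apply_pow_apply_eq_zero_of_commute {R M : Type*} [Semiring R] [AddCommMonoid M]
    [Module R M] {f g : Module.End R M} (h : Commute f g) {w : M} (hw : f w = 0) (k : ℕ) :
    f ((g ^ k) w) = 0 := by
  rw [← Module.End.mul_apply, (h.pow_right k).eq, Module.End.mul_apply, hw, map_zero]

section Leibniz

variable {R A : Type*} [CommSemiring R] [Semiring A] [Algebra R A]

/-- Odd derivations such as the contractions `∂_θ` obey this rule only at even `a`, hence the
pointwise notion. -/
def IsLeibnizAt (f : A →ₗ[R] A) (a : A) : Prop :=
  ∀ u, f (a * u) = f a * u + a * f u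

theorem isLeibnizAt_zero (f : A →ₗ[R] A) : IsLeibnizAt f 0 := by
  simp [IsLeibnizAt]

theorem isLeibnizAt_one {f : A →ₗ[R] A} (hf : f 1 = 0) : IsLeibnizAt f 1 := by
  simp [IsLeibnizAt, hf]

theorem IsLeibnizAt.add {f : A →ₗ[R] A} {a b : A} (ha : IsLeibnizAt f a)
    (hb : IsLeibnizAt f b) : IsLeibnizAt f (a + b) := by
  intro u
  rw [add_mul, map_add, ha, hb, map_add, add_mul, add_mul]
  abel

theorem IsLeibnizAt.sum {ι : Type*} {f : A →ₗ[R] A} {s : Finset ι} {a : ι → A}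
    (h : ∀ i ∈ s, IsLeibnizAt f (a i)) : IsLeibnizAt f (∑ i ∈ s, a i) :=
  Finset.sum_induction a _ (fun _ _ => IsLeibnizAt.add) (isLeibnizAt_zero f) h

end Leibniz

theorem commute_mulLeft_of_isLeibnizAt {R A : Type*} [CommSemiring R] [Ring A] [Algebra R A]
    {η c₁ c₂ : A} {f₁ f₂ : A →ₗ[R] A}
    (h₁ : IsLeibnizAt f₁ η) (h₂ : IsLeibnizAt f₂ η) (hc₁ : Commute c₁ η) (hc₂ : Commute c₂ η)
    (h : c₁ * f₁ η = c₂ * f₂ η) :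
    Commute (LinearMap.mulLeft R c₁ ∘ₗ f₁ - LinearMap.mulLeft R c₂ ∘ₗ f₂)
      (LinearMap.mulLeft R η) := by
  refine LinearMap.ext fun u => ?_
  simp only [Module.End.mul_apply, LinearMap.sub_apply, LinearMap.comp_apply,
    LinearMap.mulLeft_apply, h₁ u, h₂ u, mul_add, mul_sub, ← mul_assoc, h, hc₁.eq, hc₂.eq]
  abel

section TensorProduct

variable {R A B : Type*} [CommSemiring R] [CommSemiring A] [Algebra R A] [Semiring B] [Algebra R B]

theorem isLeibnizAt_map_derivation_id (D : Derivation R A A) (a : A ⊗[R] B) :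
    IsLeibnizAt (TensorProduct.map (D : A →ₗ[R] A) LinearMap.id) a := by
  induction a using TensorProduct.induction_on with
  | zero => exact isLeibnizAt_zero _
  | add a b ha hb => exact ha.add hb
  | tmul a b =>
    intro u
    induction u using TensorProduct.induction_on with
    | zero => simp
    | add u v hu hv => simp only [mul_add, map_add, hu, hv]; abel
    | tmul p e =>
      simp only [Algebra.TensorProduct.tmul_mul_tmul, map_tmul, LinearMap.id_apply,
        Derivation.coeFn_coe, Derivation.leibniz, smul_eq_mul, ← add_tmul]
      rw [mul_comm p, add_comm]

theorem isLeibnizAt_map_id_tmul {δ : B →ₗ[R] B} (a : A) {b : B} (hb : IsLeibnizAt δ b) :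
    IsLeibnizAt (TensorProduct.map LinearMap.id δ) (a ⊗ₜ[R] b) := by
  intro u
  induction u using TensorProduct.induction_on with
  | zero => simp
  | add u v hu hv => simp only [mul_add, map_add, hu, hv]; abel
  | tmul p e =>
    simp only [Algebra.TensorProduct.tmul_mul_tmul, map_tmul, LinearMap.id_apply, hb e, tmul_add]

end TensorProduct

namespace CliffordAlgebra

variable {R M : Type*} [CommRing R] [AddCommGroup M] [Module R M] {Q : QuadraticForm R M}
  (d : Module.Dual R M)

theorem contractLeft_list_prod_map_ι_eq_zero {l : List M} (hl : ∀ v ∈ l, d v = 0) :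
    contractLeft d (l.map (ι Q)).prod = 0 := by
  induction l with
  | nil => exact contractLeft_one Q d
  | cons a l ih =>
    rw [List.map_cons, List.prod_cons, contractLeft_ι_mul, hl a List.mem_cons_self,
      ih fun v hv => hl v (List.mem_cons_of_mem a hv), zero_smul, mul_zero, sub_zero]

theorem contractLeft_ι_mul_ι (a b : M) :
    contractLeft d (ι Q a * ι Q b) = d a • ι Q b - d b • ι Q a := by
  rw [contractLeft_ι_mul, contractLeft_ι, Algebra.algebraMap_eq_smul_one, mul_smul_comm, mul_one]

theorem isLeibnizAt_contractLeft_ι_mul_ι (a b : M) :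
    IsLeibnizAt (contractLeft d : CliffordAlgebra Q →ₗ[R] _) (ι Q a * ι Q b) := by
  intro y
  rw [mul_assoc, contractLeft_ι_mul, contractLeft_ι_mul, contractLeft_ι_mul_ι]
  simp only [mul_sub, sub_mul, smul_mul_assoc, mul_smul_comm, mul_assoc]
  abel

end CliffordAlgebra

namespace ExteriorAlgebra

variable {R M : Type*} [CommRing R] [AddCommGroup M] [Module R M]

theorem ι_mul_ι_eq_neg_swap (a b : M) : ι R a * ι R b = -(ι R b * ι R a) :=
  eq_neg_of_add_eq_zero_left (ι_add_mul_swap a b)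

theorem commute_ι_mul_ι (a b : M) (x : ExteriorAlgebra R M) : Commute (ι R a * ι R b) x := by
  induction x using ExteriorAlgebra.induction with
  | algebraMap r => exact Algebra.commute_algebraMap_right r _
  | ι v =>
    rw [Commute, SemiconjBy, mul_assoc, ι_mul_ι_eq_neg_swap b v, mul_neg, ← mul_assoc,
      ι_mul_ι_eq_neg_swap a v, neg_mul, neg_neg, mul_assoc]
  | mul x y hx hy => exact hx.mul_right hy
  | add x y hx hy => exact hx.add_right hy

theorem ι_mul_list_prod_map_ι_eq_zero {w : M} {l : List M} (hw : w ∈ l) :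
    ι R w * (l.map (ι R)).prod = 0 := by
  induction l with
  | nil => simp at hw
  | cons a l ih =>
    rw [List.map_cons, List.prod_cons, ← mul_assoc]
    rcases List.mem_cons.mp hw with rfl | hw
    · rw [ι_sq_zero, zero_mul]
    · rw [ι_mul_ι_eq_neg_swap, neg_mul, mul_assoc, ih hw, mul_zero, neg_zero]

theorem ι_mul_contractLeft_list_prod_map_ι_eq_zero (d : Module.Dual R M) {w : M} (hd : d w = 0)
    {l : List M} (hw : w ∈ l) :
    ι R w * CliffordAlgebra.contractLeft d (l.map (ι R)).prod = 0 := by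
  have := CliffordAlgebra.contractLeft_ι_mul d w (l.map (ι R)).prod
  rwa [ι_mul_list_prod_map_ι_eq_zero hw, map_zero, hd, zero_smul, zero_sub, zero_eq_neg] at this

end ExteriorAlgebra

section Oscillator

variable {n m : ℕ}

theorem commute_ηelt (u : SAlg n m) : Commute (ηelt n m) u := by
  induction u using TensorProduct.induction_on with
  | zero => exact Commute.zero_right _
  | add u v hu hv => exact hu.add_right hv
  | tmul p e =>
    refine .add_left (.sum_left _ _ _ fun i _ => ?_) (.sum_left _ _ _ fun r _ => ?_)
    · exact (Commute.all _ _).tmul (Commute.one_left e)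
    · exact (Commute.one_left p).tmul (ExteriorAlgebra.commute_ι_mul_ι _ _ e)

theorem isLeibnizAt_map_id_contractLeft_ηelt (d : Module.Dual ℂ (Fin m ⊕ Fin m → ℂ)) :
    IsLeibnizAt (TensorProduct.map LinearMap.id (CliffordAlgebra.contractLeft (Q := 0) d) :
      Module.End ℂ (SAlg n m)) (ηelt n m) :=
  (IsLeibnizAt.sum fun _ _ =>
      isLeibnizAt_map_id_tmul _ (isLeibnizAt_one (CliffordAlgebra.contractLeft_one 0 d))).add
    (IsLeibnizAt.sum fun _ _ =>
      isLeibnizAt_map_id_tmul _ (CliffordAlgebra.isLeibnizAt_contractLeft_ι_mul_ι d _ _))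

theorem pdx_ηelt (i : Fin n) : pdx n m i (ηelt n m) = yv n i ⊗ₜ 1 := by
  simp [ηelt, pdx, xv, yv, Pi.single_apply, ite_tmul]

theorem pdy_ηelt (i : Fin n) : pdy n m i (ηelt n m) = xv n i ⊗ₜ 1 := by
  simp [ηelt, pdy, xv, yv, Pi.single_apply, ite_tmul]

theorem pdθ_ηelt (r : Fin m) : pdθ n m r (ηelt n m) = 1 ⊗ₜ ϑv m r := by
  simp [ηelt, pdθ, dθ, θv, ϑv, CliffordAlgebra.contractLeft_ι_mul_ι, Pi.single_apply, tmul_ite]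

theorem pdϑ_ηelt (r : Fin m) : pdϑ n m r (ηelt n m) = -(1 ⊗ₜ θv m r) := by
  simp [ηelt, pdϑ, dϑ, θv, ϑv, CliffordAlgebra.contractLeft_ι_mul_ι, Pi.single_apply, tmul_ite,
    tmul_neg]

theorem Eij_commute_ηop (i j : Fin n) : Commute (Eij n m i j) (ηop n m) :=
  commute_mulLeft_of_isLeibnizAt (isLeibnizAt_map_derivation_id _ _)
    (isLeibnizAt_map_derivation_id _ _) (commute_ηelt _).symm (commute_ηelt _).symm <| by
      rw [pdx_ηelt, pdy_ηelt, Algebra.TensorProduct.tmul_mul_tmul,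
        Algebra.TensorProduct.tmul_mul_tmul, mul_comm]

theorem Einr_commute_ηop (i : Fin n) (r : Fin m) : Commute (Einr n m i r) (ηop n m) :=
  commute_mulLeft_of_isLeibnizAt (isLeibnizAt_map_id_contractLeft_ηelt _)
    (isLeibnizAt_map_derivation_id _ _) (commute_ηelt _).symm (commute_ηelt _).symm <| by
      rw [pdθ_ηelt, pdy_ηelt, Algebra.TensorProduct.tmul_mul_tmul,
        Algebra.TensorProduct.tmul_mul_tmul, mul_one, one_mul, mul_one, one_mul]

theorem Enrs_commute_ηop (r s : Fin m) : Commute (Enrs n m r s) (ηop n m) :=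
  commute_mulLeft_of_isLeibnizAt (isLeibnizAt_map_id_contractLeft_ηelt _)
    (isLeibnizAt_map_id_contractLeft_ηelt _) (commute_ηelt _).symm (commute_ηelt _).symm <| by
      rw [pdθ_ηelt, pdϑ_ηelt, ← tmul_neg, Algebra.TensorProduct.tmul_mul_tmul,
        Algebra.TensorProduct.tmul_mul_tmul, mul_one, mul_neg, θv, ϑv,
        ExteriorAlgebra.ι_mul_ι_eq_neg_swap]

theorem Eij_tmul (i j : Fin n) (p : PolyA n) (e : ExtA m) :
    Eij n m i j (p ⊗ₜ e)
      = (xv n i * pderiv (Sum.inl j) p - yv n j * pderiv (Sum.inr i) p) ⊗ₜ e := by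
  simp [Eij, mx, my, pdx, pdy, sub_tmul]

theorem Einr_tmul (i : Fin n) (r : Fin m) (p : PolyA n) (e : ExtA m) :
    Einr n m i r (p ⊗ₜ e) = (xv n i * p) ⊗ₜ dθ m r e - pderiv (Sum.inr i) p ⊗ₜ (ϑv m r * e) := by
  simp [Einr, mx, mϑ, pdθ, pdy]

theorem Enrs_tmul (r t : Fin m) (p : PolyA n) (e : ExtA m) :
    Enrs n m r t (p ⊗ₜ e) = p ⊗ₜ (θv m r * dθ m t e - ϑv m t * dϑ m r e) := by
  simp [Enrs, mθ, mϑ, pdθ, pdϑ, tmul_sub]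

theorem List.mem_drop_finRange_iff {m k : ℕ} {t : Fin m} :
    t ∈ (List.finRange m).drop k ↔ k ≤ t := by
  simp only [List.mem_iff_getElem, List.getElem_drop, List.getElem_finRange, List.length_drop,
    List.length_finRange]
  constructor
  · rintro ⟨i, hi, rfl⟩
    simp
  · intro h
    exact ⟨t - k, by omega, by ext; simp only [Fin.cast_mk]; omega⟩

theorem ϑvec_eq_list_prod (s : ℕ) :
    ϑvec m s = ((((List.finRange m).drop (s - 1)).reverse.map
      fun t => Pi.single (Sum.inr t) 1).map (ExteriorAlgebra.ι ℂ)).prod := by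
  rw [ϑvec, List.map_map]
  rfl

theorem dθ_ϑvec (r : Fin m) (s : ℕ) : dθ m r (ϑvec m s) = 0 := by
  rw [ϑvec_eq_list_prod]
  refine CliffordAlgebra.contractLeft_list_prod_map_ι_eq_zero _ ?_
  simp only [List.mem_map]
  rintro _ ⟨t, -, rfl⟩
  simp

theorem dϑ_ϑvec_of_lt {r : Fin m} {s : ℕ} (h : r.val + 1 < s) : dϑ m r (ϑvec m s) = 0 := by
  rw [ϑvec_eq_list_prod]
  refine CliffordAlgebra.contractLeft_list_prod_map_ι_eq_zero _ ?_
  simp only [List.mem_map, List.mem_reverse, List.mem_drop_finRange_iff]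
  rintro _ ⟨t, ht, rfl⟩
  have htr : t ≠ r := Fin.ne_of_val_ne (by omega)
  simp [htr]

theorem ϑv_mul_dϑ_ϑvec {r t : Fin m} (hne : t ≠ r) {s : ℕ} (h : s ≤ t.val + 1) :
    ϑv m t * dϑ m r (ϑvec m s) = 0 := by
  rw [ϑvec_eq_list_prod]
  refine ExteriorAlgebra.ι_mul_contractLeft_list_prod_map_ι_eq_zero _ (by simp [hne]) ?_
  simp only [List.mem_map, List.mem_reverse, List.mem_drop_finRange_iff]
  exact ⟨t, by omega, rfl⟩

theorem Eij_xv_pow_tmul (i : Fin n) {j k : Fin n} (hjk : j ≠ k) (ℓ : ℕ) (e : ExtA m) :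
    Eij n m i j ((xv n k ^ ℓ) ⊗ₜ e) = 0 := by
  simp [Eij_tmul, xv, hjk]

theorem Einr_xv_pow_tmul_ϑvec (i : Fin n) (r : Fin m) (k : Fin n) (ℓ s : ℕ) :
    Einr n m i r ((xv n k ^ ℓ) ⊗ₜ ϑvec m s) = 0 := by
  simp [Einr_tmul, xv, dθ_ϑvec]

theorem Enrs_tmul_ϑvec {r t : Fin m} (hrt : r < t) (p : PolyA n) (s : ℕ) :
    Enrs n m r t (p ⊗ₜ ϑvec m s) = 0 := by
  rw [Enrs_tmul, dθ_ϑvec, mul_zero, zero_sub, tmul_neg, neg_eq_zero]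
  rcases le_or_gt s (t.val + 1) with hs | hs
  · rw [ϑv_mul_dϑ_ϑvec hrt.ne' hs, tmul_zero]
  · rw [dϑ_ϑvec_of_lt (by omega), mul_zero, tmul_zero]

end Oscillator

theorem singular_vector_annihilated (hn : 2 ≤ n) (ℓ₁ s : ℕ) :
    let v : SAlg n m :=
      (ηop n m ^ (s - ℓ₁ - n)) ((xv n ⟨0, by omega⟩ ^ ℓ₁) ⊗ₜ[ℂ] ϑvec m s)
    (∀ i j : Fin n, i < j → Eij n m i j v = 0)
    ∧ (∀ r s' : Fin m, r < s' → Enrs n m r s' v = 0)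
    ∧ (∀ (i : Fin n) (r : Fin m), Einr n m i r v = 0) := by
  intro v
  refine ⟨fun i j hij => ?_, fun r s' hrs => ?_, fun i r => ?_⟩
  · have hj : j.val ≠ 0 := ((Nat.zero_le i.val).trans_lt hij).ne'
    exact apply_pow_apply_eq_zero_of_commute (Eij_commute_ηop i j)
      (Eij_xv_pow_tmul i (Fin.ne_of_val_ne hj) _ _) _
  · exact apply_pow_apply_eq_zero_of_commute (Enrs_commute_ηop r s') (Enrs_tmul_ϑvec hrs _ _) _
  · exact apply_pow_apply_eq_zero_of_commute (Einr_commute_ηop i r)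
      (Einr_xv_pow_tmul_ϑvec i r _ _ _) _
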